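/- arXiv:2110.08311 — 5 statements merged into one kernel-verified Lean document; each statement's English description precedes it below -/
import Mathlib

section
/- Two strict ordered bases 𝔅 and 𝔅' on a topological space X are equivalent if, and only if, they are strictly equivalent, where strict equivalence is defined like equivalence but with the relation ⊆_lax replaced by ⊆_str. -/
universe u v w v'

/-! ## Ordered bases and locally ordered spaces -/

/-- An *ordered subset* of `X`: a pair of a carrier set and a relation on `X`
(intended to be a partial order on the carrier). -/
structure OSet (X : Type u) : Type u where
  carrier : Set X
  le : X → X → Prop

namespace OSet

variable {X : Type u} {Y : Type v}

/-- `B` is a partially ordered subset: the relation only relates elements of the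
carrier, is reflexive on the carrier, antisymmetric and transitive. -/
def IsPoset (B : OSet X) : Prop :=
  (∀ p q, B.le p q → p ∈ B.carrier ∧ q ∈ B.carrier) ∧
  (∀ p ∈ B.carrier, B.le p p) ∧
  (∀ p q, B.le p q → B.le q p → p = q) ∧
  (∀ p q r, B.le p q → B.le q r → B.le p r)

/-- `B ⊆_lax B'`. -/
def laxSub (B B' : OSet X) : Prop :=
  B.carrier ⊆ B'.carrier ∧ ∀ p q, B.le p q → B'.le p q

/-- `B ⊆_str B'` : the carrier is included and `≤_B` is the restriction of `≤_{B'}`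
to the carrier of `B`. -/
def strSub (B B' : OSet X) : Prop :=
  B.carrier ⊆ B'.carrier ∧ ∀ p ∈ B.carrier, ∀ q ∈ B.carrier, (B.le p q ↔ B'.le p q)

/-- Product of two ordered subsets, with the product order. -/
def prod (B : OSet X) (B' : OSet Y) : OSet (X × Y) where
  carrier := B.carrier ×ˢ B'.carrier
  le p q := B.le p.1 q.1 ∧ B'.le p.2 q.2

/-- The restriction of an ordered subset to a subset `S` (of its carrier). -/
def restrict (B : OSet X) (S : Set X) : OSet X where
  carrier := S
  le p q := B.le p q ∧ p ∈ S ∧ q ∈ S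

/-- `B` is a Nachbin ordered (sub)space: its order is closed in the product of the
subspace `B.carrier` (with the topology inherited from `X`) with itself. -/
def IsNachbin [TopologicalSpace X] (B : OSet X) : Prop :=
  IsClosed {p : B.carrier × B.carrier | B.le p.1 p.2}

end OSet

/-- `𝔅` is an *ordered basis* on the topological space `X`. -/
structure IsOrderedBasis {X : Type u} [TopologicalSpace X] (𝔅 : Set (OSet X)) : Prop where
  isPoset : ∀ B ∈ 𝔅, B.IsPoset
  isBasis : TopologicalSpace.IsTopologicalBasis (OSet.carrier '' 𝔅)
  compat : ∀ x : X, ∀ B ∈ 𝔅, ∀ B' ∈ 𝔅, x ∈ B.carrier → x ∈ B'.carrier →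
    ∃ B'' ∈ 𝔅, x ∈ B''.carrier ∧ B''.carrier ⊆ B.carrier ∩ B'.carrier ∧
      ∀ p q, B''.le p q → B.le p q ∧ B'.le p q

/-- `𝔅` is a *strict* ordered basis: the interpolating element `B''` can be chosen
with `B'' ⊆_str B` and `B'' ⊆_str B'`. -/
def IsStrictOrderedBasis {X : Type u} [TopologicalSpace X] (𝔅 : Set (OSet X)) : Prop :=
  IsOrderedBasis 𝔅 ∧
    ∀ x : X, ∀ B ∈ 𝔅, ∀ B' ∈ 𝔅, x ∈ B.carrier → x ∈ B'.carrier →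
      ∃ B'' ∈ 𝔅, x ∈ B''.carrier ∧ B''.strSub B ∧ B''.strSub B'

/-- `𝔅'` is coarser than `𝔅`. -/
def CoarserThan {X : Type u} (𝔅' 𝔅 : Set (OSet X)) : Prop :=
  ∀ x : X, ∀ B' ∈ 𝔅', x ∈ B'.carrier → ∃ B ∈ 𝔅, x ∈ B.carrier ∧ B.laxSub B'

/-- `𝔅'` is strictly coarser than `𝔅` (`⊆_lax` replaced by `⊆_str`). -/
def StrictCoarserThan {X : Type u} (𝔅' 𝔅 : Set (OSet X)) : Prop :=
  ∀ x : X, ∀ B' ∈ 𝔅', x ∈ B'.carrier → ∃ B ∈ 𝔅, x ∈ B.carrier ∧ B.strSub B'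

/-- Two ordered bases are equivalent when each is coarser than the other. -/
def EquivBases {X : Type u} (𝔅 𝔅' : Set (OSet X)) : Prop :=
  CoarserThan 𝔅' 𝔅 ∧ CoarserThan 𝔅 𝔅'

/-- Strict equivalence of ordered bases. -/
def StrictEquivBases {X : Type u} (𝔅 𝔅' : Set (OSet X)) : Prop :=
  StrictCoarserThan 𝔅' 𝔅 ∧ StrictCoarserThan 𝔅 𝔅'

/-- The *open posets* `Ō(𝔅)` determined by an ordered basis `𝔅`. -/
def openPosets {X : Type u} (𝔅 : Set (OSet X)) : Set (OSet X) :=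
  {A | ∀ x ∈ A.carrier, ∃ B ∈ 𝔅, x ∈ B.carrier ∧ B.laxSub A}

/-- `f` is locally increasing at `x`, w.r.t. the ordered bases `𝔅` (source) and
`𝔅'` (target). -/
def LocIncrAt {X : Type u} {Y : Type v} (𝔅 : Set (OSet X)) (𝔅' : Set (OSet Y))
    (f : X → Y) (x : X) : Prop :=
  ∀ B' ∈ 𝔅', f x ∈ B'.carrier →
    ∃ B ∈ 𝔅, x ∈ B.carrier ∧ (∀ p ∈ B.carrier, f p ∈ B'.carrier) ∧
      ∀ p q, B.le p q → B'.le (f p) (f q)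

/-- `f` is locally increasing. -/
def LocIncr {X : Type u} {Y : Type v} (𝔅 : Set (OSet X)) (𝔅' : Set (OSet Y))
    (f : X → Y) : Prop :=
  ∀ x : X, LocIncrAt 𝔅 𝔅' f x

/-- The locally ordered space given by the basis `𝔅` is locally Nachbin. -/
def IsLocallyNachbin {X : Type u} [TopologicalSpace X] (𝔅 : Set (OSet X)) : Prop :=
  ∀ x : X, ∀ O ∈ openPosets 𝔅, x ∈ O.carrier →
    ∃ O' ∈ openPosets 𝔅, x ∈ O'.carrier ∧ O'.laxSub O ∧ O'.IsNachbin

/-- The product ordered basis on `X × Y`. -/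
def prodBasis {X : Type u} {Y : Type v} (𝔅 : Set (OSet X)) (𝔅' : Set (OSet Y)) :
    Set (OSet (X × Y)) :=
  {C | ∃ B ∈ 𝔅, ∃ B' ∈ 𝔅', C = B.prod B'}

/-- A topological space viewed as a locally ordered space: all its open subsets,
each ordered by equality. -/
def trivBasis (T : Type v) [TopologicalSpace T] : Set (OSet T) :=
  {B | ∃ U : Set T, IsOpen U ∧ B = ⟨U, fun p q => p = q ∧ p ∈ U⟩}

/-!
Given `x ∈ B' ∈ 𝔅'`, equivalence yields `x ∈ B ∈ 𝔅` with `B ⊆_lax B'` and `x ∈ C' ∈ 𝔅'` with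
`C' ⊆_lax B`. Strictness of `𝔅'` gives `x ∈ D' ∈ 𝔅'` with `D' ⊆_str C'` and `D' ⊆_str B'`, and
after passing back to some `x ∈ E ∈ 𝔅` with `E ⊆_lax D'`, strictness of `𝔅` gives `x ∈ F ∈ 𝔅`
with `F ⊆_str E` and `F ⊆_str B`. On `|F|` the order `≤_F` is then squeezed:
`≤_F ⟹ ≤_B ⟹ ≤_{B'}` and `≤_{B'} ⟹ ≤_{D'} ⟹ ≤_{C'} ⟹ ≤_B ⟹ ≤_F`, so `F ⊆_str B'`.
-/

namespace OSet

variable {X : Type u} {B B' D F : OSet X}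

theorem laxSub.trans (h₁ : B.laxSub B') (h₂ : B'.laxSub D) : B.laxSub D :=
  ⟨h₁.1.trans h₂.1, fun p q hpq => h₂.2 p q (h₁.2 p q hpq)⟩

theorem strSub.laxSub (hB : B.IsPoset) (h : B.strSub B') : B.laxSub B' :=
  ⟨h.1, fun p q hpq => (h.2 p (hB.1 p q hpq).1 q (hB.1 p q hpq).2).1 hpq⟩

theorem strSub.of_squeeze (hFB : F.strSub B) (hBB' : B.laxSub B') (hFD : F.carrier ⊆ D.carrier)
    (hDB' : D.strSub B') (hDB : D.laxSub B) : F.strSub B' :=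
  ⟨hFB.1.trans hBB'.1, fun p hp q hq =>
    ⟨fun hpq => hBB'.2 p q ((hFB.2 p hp q hq).1 hpq),
      fun hpq => (hFB.2 p hp q hq).2 (hDB.2 p q ((hDB'.2 p (hFD hp) q (hFD hq)).2 hpq))⟩⟩

end OSet

section

variable {X : Type u} {𝔅 𝔅' : Set (OSet X)}

theorem StrictCoarserThan.coarserThan (h𝔅 : ∀ B ∈ 𝔅, B.IsPoset)
    (h : StrictCoarserThan 𝔅' 𝔅) : CoarserThan 𝔅' 𝔅 := by
  intro x B' hB' hx
  obtain ⟨B, hB, hxB, hBB'⟩ := h x B' hB' hx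
  exact ⟨B, hB, hxB, hBB'.laxSub (h𝔅 B hB)⟩

theorem CoarserThan.strictCoarserThan [TopologicalSpace X] (h : IsStrictOrderedBasis 𝔅)
    (h' : IsStrictOrderedBasis 𝔅') (h₁ : CoarserThan 𝔅' 𝔅) (h₂ : CoarserThan 𝔅 𝔅') :
    StrictCoarserThan 𝔅' 𝔅 := by
  intro x B' hB' hx
  obtain ⟨B, hB, hxB, hBB'⟩ := h₁ x B' hB' hx
  obtain ⟨C', hC', hxC', hC'B⟩ := h₂ x B hB hxB
  obtain ⟨D', hD', hxD', hD'C', hD'B'⟩ := h'.2 x C' hC' B' hB' hxC' hx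
  obtain ⟨E, hE, hxE, hED'⟩ := h₁ x D' hD' hxD'
  obtain ⟨F, hF, hxF, hFE, hFB⟩ := h.2 x E hE B hB hxE hxB
  exact ⟨F, hF, hxF, hFB.of_squeeze hBB' (hFE.1.trans hED'.1) hD'B'
    ((hD'C'.laxSub (h'.1.isPoset D' hD')).trans hC'B)⟩

end

/-- Two strict ordered bases on a topological space are
equivalent if, and only if, they are strictly equivalent. -/
theorem stmt0 {X : Type u} [TopologicalSpace X] (𝔅 𝔅' : Set (OSet X))
    (h : IsStrictOrderedBasis 𝔅) (h' : IsStrictOrderedBasis 𝔅') :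
    EquivBases 𝔅 𝔅' ↔ StrictEquivBases 𝔅 𝔅' :=
  ⟨fun ⟨h₁, h₂⟩ => ⟨h₁.strictCoarserThan h h' h₂, h₂.strictCoarserThan h' h h₁⟩,
    fun ⟨h₁, h₂⟩ => ⟨h₁.coarserThan h.1.isPoset, h₂.coarserThan h'.1.isPoset⟩⟩
end

section
/- Let X and Y be locally ordered spaces and f : S⃗¹ × X → Y a locally increasing map, where S⃗¹ × X carries the product locally ordered structure. Then the set K(f) := {t ∈ X : f(s,t) = f(s',t) for all s, s' ∈ S¹} is an open subset of X. -/
/-!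
Fix `t ∈ K(f)`, so that `f (·, t)` is constant with value `y`, and a basic ordered neighbourhood
`B₀` of `y`. Local increasingness at each `(s, t)` yields an arc times a basic open of `X` on which
`f` is increasing into `B₀`; by compactness of `S¹` finitely many arcs cover the circle, and the
intersection `N` of the corresponding basic opens is a neighbourhood of `t`. For `t' ∈ N` the map
`s ↦ f (s, t')` is locally increasing from `S⃗¹` to the poset `B₀`, so its lift `x ↦ f (e^{ix}, t')`
is increasing on `ℝ`. Being `2π`-periodic, any two of its values are comparable both ways, hence
equal by antisymmetry, i.e. `t' ∈ K(f)`.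
-/

universe u v w v'

/-! ## The directed circle -/

/-- The proper open arc `{e^{ix} : a < x < b}` of the unit circle, with its
standard partial order. -/
def arcOSet (a b : ℝ) : OSet Circle where
  carrier := Circle.exp '' Set.Ioo a b
  le p q := ∃ x ∈ Set.Ioo a b, ∃ y ∈ Set.Ioo a b, x ≤ y ∧ Circle.exp x = p ∧ Circle.exp y = q

/-- The strict ordered basis of the directed circle `S⃗¹`: all proper open arcs
with their standard orders. -/
def dCircleBasis : Set (OSet Circle) :=
  {B | ∃ a b : ℝ, 0 < b - a ∧ b - a < 2 * Real.pi ∧ B = arcOSet a b}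

/-- `K(f) = {t | ∀ s s', f (s,t) = f (s',t)}`. -/
def Kset {X : Type u} {Y : Type v} (f : Circle × X → Y) : Set X :=
  {t | ∀ s s' : Circle, f (s, t) = f (s', t)}


open Set Filter Topology Function

theorem rel_of_le_of_locally_rel {α : Type*} {r : α → α → Prop} [IsTrans α r] {g : ℝ → α}
    (hloc : ∀ u, ∃ s ∈ 𝓝 u, ∀ x ∈ s, ∀ z ∈ s, x ≤ z → r (g x) (g z)) {u v : ℝ} (huv : u ≤ v) :
    r (g u) (g v) := by
  have hrefl : ∀ x, r (g x) (g x) := fun x =>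
    let ⟨_, hs, hmono⟩ := hloc x
    hmono x (mem_of_mem_nhds hs) x (mem_of_mem_nhds hs) le_rfl
  set S := {w ∈ Icc u v | r (g u) (g w)}
  have huS : u ∈ S := ⟨left_mem_Icc.2 huv, hrefl u⟩
  have hbdd : BddAbove S := ⟨v, fun w hw => hw.1.2⟩
  -- local monotonicity at `c := sup S` pushes `S` beyond `c` unless `c = v`
  set c := sSup S
  obtain ⟨s, hs, hmono⟩ := hloc c
  obtain ⟨ε, hε, hball⟩ := Metric.mem_nhds_iff.1 hs
  obtain ⟨w, hwS, hcw⟩ := exists_lt_of_lt_csSup ⟨u, huS⟩ (sub_lt_self c hε)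
  have hwc : w ≤ c := le_csSup hbdd hwS
  have hcv : c ≤ v := csSup_le ⟨u, huS⟩ fun w hw => hw.1.2
  set z := min (c + ε / 2) v
  have hcz : c ≤ z := le_min (by linarith) hcv
  have hws : w ∈ s := hball (by
    rw [Metric.mem_ball, Real.dist_eq, abs_sub_lt_iff]
    constructor <;> linarith)
  have hzs : z ∈ s := hball (by
    rw [Metric.mem_ball, Real.dist_eq, abs_sub_lt_iff]
    constructor <;> linarith [min_le_left (c + ε / 2) v])
  have hzS : z ∈ S :=
    ⟨⟨(le_csSup hbdd huS).trans hcz, min_le_right _ _⟩,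
      _root_.trans hwS.2 (hmono w hws z hzs (hwc.trans hcz))⟩
  have hzv : z = v := by
    have hzc : z ≤ c := le_csSup hbdd hzS
    refine min_eq_right (not_lt.1 fun hlt => ?_)
    have : z = c + ε / 2 := min_eq_left hlt.le
    linarith
  exact hzv ▸ hzS.2

theorem Function.Periodic.rel_of_rel_of_le {α : Type*} {r : α → α → Prop} {g : ℝ → α} {T : ℝ}
    (hg : Periodic g T) (hT : 0 < T) (hmono : ∀ u v, u ≤ v → r (g u) (g v)) (u v : ℝ) :
    r (g u) (g v) := by
  obtain ⟨n, hn⟩ := Archimedean.arch (u - v) hT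
  simpa only [hg.nsmul n v] using hmono u (v + n • T) (by linarith)

theorem exists_mem_nhds_arcOSet_le {a b u : ℝ} (hu : Circle.exp u ∈ (arcOSet a b).carrier) :
    ∃ s ∈ 𝓝 u, ∀ x ∈ s, ∀ z ∈ s, x ≤ z → (arcOSet a b).le (Circle.exp x) (Circle.exp z) := by
  obtain ⟨w, hw, hwu⟩ := hu
  have hexp : ∀ x, Circle.exp (x - (u - w)) = Circle.exp x := fun x => by
    rw [Circle.exp_sub, Circle.exp_sub, hwu, div_self', div_one]
  refine ⟨Ioo (a + (u - w)) (b + (u - w)), Ioo_mem_nhds (by linarith [hw.1]) (by linarith [hw.2]),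
    fun x hx z hz hxz => ⟨x - (u - w), ?_, z - (u - w), ?_, by linarith, hexp x, hexp z⟩⟩
  · exact ⟨by linarith [hx.1], by linarith [hx.2]⟩
  · exact ⟨by linarith [hz.1], by linarith [hz.2]⟩

theorem eq_of_forall_exists_arcOSet_le {α : Type*} {r : α → α → Prop} [IsTrans α r]
    [Std.Antisymm r] {h : Circle → α}
    (hloc : ∀ s, ∃ a b, s ∈ (arcOSet a b).carrier ∧ ∀ p q, (arcOSet a b).le p q → r (h p) (h q))
    (s s' : Circle) : h s = h s' := by
  have hmono : ∀ u v : ℝ, u ≤ v → r (h (Circle.exp u)) (h (Circle.exp v)) := by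
    refine fun u v => rel_of_le_of_locally_rel (g := h ∘ Circle.exp) fun x => ?_
    obtain ⟨a, b, hx, harc⟩ := hloc (Circle.exp x)
    obtain ⟨t, ht, hle⟩ := exists_mem_nhds_arcOSet_le hx
    exact ⟨t, ht, fun y hy z hz hyz => harc _ _ (hle y hy z hz hyz)⟩
  have hrel := (Circle.periodic_exp.comp h).rel_of_rel_of_le Real.two_pi_pos hmono
  rw [← Circle.exp_arg s, ← Circle.exp_arg s']
  exact antisymm (hrel _ _) (hrel _ _)

theorem LocIncr.eventually_forall_exists_arcOSet_le {X : Type u} {Y : Type v}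
    [TopologicalSpace X] {𝔅 : Set (OSet X)} (h𝔅 : IsOrderedBasis 𝔅) {𝔅' : Set (OSet Y)}
    {f : Circle × X → Y} (hf : LocIncr (prodBasis dCircleBasis 𝔅) 𝔅' f)
    {B₀ : OSet Y} (hB₀ : B₀ ∈ 𝔅') {t : X} (ht : ∀ s, f (s, t) ∈ B₀.carrier) :
    ∀ᶠ t' in 𝓝 t, ∀ s, ∃ a b, s ∈ (arcOSet a b).carrier ∧
      ∀ p q, (arcOSet a b).le p q → B₀.le (f (p, t')) (f (q, t')) := by
  have hprod : ∀ s, ∃ a b, ∃ B ∈ 𝔅, s ∈ (arcOSet a b).carrier ∧ t ∈ B.carrier ∧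
      ∀ p q, ((arcOSet a b).prod B).le p q → B₀.le (f p) (f q) := by
    intro s
    obtain ⟨_, ⟨_, ⟨a, b, -, -, rfl⟩, B, hB, rfl⟩, ⟨hs, htB⟩, -, hmono⟩ := hf (s, t) B₀ hB₀ (ht s)
    exact ⟨a, b, B, hB, hs, htB, hmono⟩
  choose a b B hB hs htB hmono using hprod
  obtain ⟨I, hI⟩ := isCompact_univ.elim_finite_subcover (fun s => (arcOSet (a s) (b s)).carrier)
    (fun s => isLocalHomeomorph_circleExp.isOpenMap _ isOpen_Ioo)
    (fun s _ => mem_iUnion.2 ⟨s, hs s⟩)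
  have hN : ⋂ i ∈ I, (B i).carrier ∈ 𝓝 t := (biInter_finset_mem I).2 fun i _ =>
    (h𝔅.isBasis.isOpen ⟨B i, hB i, rfl⟩).mem_nhds (htB i)
  filter_upwards [hN] with t' ht' s
  obtain ⟨i, hi, hsi⟩ := mem_iUnion₂.1 (hI (mem_univ s))
  have ht'B : t' ∈ (B i).carrier := mem_iInter₂.1 ht' i hi
  exact ⟨a i, b i, hsi, fun p q hpq =>
    hmono i (p, t') (q, t') ⟨hpq, (h𝔅.isPoset (B i) (hB i)).2.1 t' ht'B⟩⟩

/-- For `X`, `Y` locally ordered spaces and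
`f : S⃗¹ × X → Y` locally increasing, the set `K(f)` is open in `X`. -/
theorem stmt4 {X : Type u} {Y : Type v} [TopologicalSpace X] [TopologicalSpace Y]
    (𝔅 : Set (OSet X)) (h𝔅 : IsOrderedBasis 𝔅)
    (𝔅' : Set (OSet Y)) (h𝔅' : IsOrderedBasis 𝔅')
    (f : Circle × X → Y) (hf : LocIncr (prodBasis dCircleBasis 𝔅) 𝔅' f) :
    IsOpen (Kset f) := by
  refine isOpen_iff_mem_nhds.2 fun t ht => ?_
  obtain ⟨_, ⟨B₀, hB₀, rfl⟩, hyB₀, -⟩ :=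
    h𝔅'.isBasis.exists_subset_of_mem_open (mem_univ (f (1, t))) isOpen_univ
  have : IsTrans Y B₀.le := ⟨(h𝔅'.isPoset B₀ hB₀).2.2.2⟩
  have : Std.Antisymm B₀.le := ⟨(h𝔅'.isPoset B₀ hB₀).2.2.1⟩
  filter_upwards [hf.eventually_forall_exists_arcOSet_le h𝔅 hB₀ fun s => ht s 1 ▸ hyB₀]
    with t' ht' s s'
  exact eq_of_forall_exists_arcOSet_le ht' s s'
end

section
/- Let X be a locally ordered space, ∗ ∈ X, and O an open neighbourhood of ∗. The map q_O : S⃗¹ × X → X_O is locally increasing, where S⃗¹ × X carries the product locally ordered structure and X_O the final topology of q_O with the ordered basis of the posets (U_{α,A}, ≤_{α,A}). -/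
universe u v w v'

/-! ## The space `X_O` -/

/-- The underlying set of `X_O := O ⊔ (S¹ × (X ∖ O))`. -/
def XO (X : Type u) (O : Set X) : Type u := ↥O ⊕ (Circle × ↥(Oᶜ))

open Classical in
/-- The map `q_O : S¹ × X → X_O`. -/
noncomputable def qO {X : Type u} (O : Set X) : Circle × X → XO X O := fun p =>
  if h : p.2 ∈ O then Sum.inl ⟨p.2, h⟩ else Sum.inr (p.1, ⟨p.2, h⟩)

/-- `X_O` carries the final topology of `q_O`. -/
noncomputable instance XO.topology {X : Type u} [TopologicalSpace X] (O : Set X) :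
    TopologicalSpace (XO X O) :=
  TopologicalSpace.coinduced (qO O) inferInstance

/-- The subset `U_{α,A}` of `X_O` (for `αc` a set of points of the circle and
`A` a subset of `X`). -/
def USet {X : Type u} (O : Set X) (αc : Set Circle) (A : Set X) : Set (XO X O) :=
  Sum.inl '' {t : ↥O | (t : X) ∈ A} ∪
    Sum.inr '' {p : Circle × ↥(Oᶜ) | p.1 ∈ αc ∧ (p.2 : X) ∈ A}

/-- The second component of an element of `X_O`. -/
def XO.p2 {X : Type u} {O : Set X} : XO X O → X :=
  Sum.elim (fun t => (t : X)) (fun p => (p.2 : X))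

/-- The relation `≤¹_{α,A}` on `X_O`: the image under `q_O` of the product order
on `α × A`. -/
def leOne {X : Type u} (O : Set X) (α : OSet Circle) (A : OSet X) (u u' : XO X O) : Prop :=
  ∃ x x' : Circle × X, α.le x.1 x'.1 ∧ A.le x.2 x'.2 ∧ qO O x = u ∧ qO O x' = u'

/-- The relation `⊑` on `X_O`. -/
def sqsub {X : Type u} (O : Set X) (α : OSet Circle) (A : OSet X) (u u' : XO X O) : Prop :=
  A.le (XO.p2 u) (XO.p2 u') ∧
    ((∃ t : ↥O, u = Sum.inl t) ∨ (∃ t : ↥O, u' = Sum.inl t) ∨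
      ∃ (s s' : Circle) (t t' : ↥(Oᶜ)),
        u = Sum.inr (s, t) ∧ u' = Sum.inr (s', t') ∧ α.le s s')

/-- The poset `(U_{α,A}, ≤_{α,A})`, where `≤_{α,A}` is the transitive closure of
`≤¹_{α,A}`. -/
def UOSet {X : Type u} (O : Set X) (α : OSet Circle) (A : OSet X) : OSet (XO X O) where
  carrier := USet O α.carrier A.carrier
  le := Relation.TransGen (leOne O α A)

/-- The ordered basis of `X_O`: the posets `(U_{α,A}, ≤_{α,A})` for `α` a proper
open arc and `A` an open poset of `X`. -/
def XOBasis {X : Type u} (𝔅 : Set (OSet X)) (O : Set X) : Set (OSet (XO X O)) :=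
  {C | ∃ a b : ℝ, 0 < b - a ∧ b - a < 2 * Real.pi ∧
    ∃ A ∈ openPosets 𝔅, C = UOSet O (arcOSet a b) A}
/-!
On `S¹ × O` the map `q_O` forgets the circle coordinate, so near a point `(s, t)` with
`t ∈ O` any arc around `s` times a basis poset inside `O ∩ |A|` is sent increasingly into
`U_{α,A}`: two comparable points are compared through one fixed point of `α`. Off `O`, `q_O` is injective and the product
order of `α × A` is exactly what generates `≤_{α,A}`.
-/

section XO

variable {X : Type u} {O : Set X}

theorem qO_of_mem {s : Circle} {t : X} (ht : t ∈ O) : qO O (s, t) = Sum.inl ⟨t, ht⟩ :=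
  dif_pos ht

theorem qO_of_notMem {s : Circle} {t : X} (ht : t ∉ O) :
    qO O (s, t) = Sum.inr (s, ⟨t, ht⟩) :=
  dif_neg ht

theorem qO_eq_of_mem {t : X} (ht : t ∈ O) (s s' : Circle) : qO O (s, t) = qO O (s', t) := by
  rw [qO_of_mem ht, qO_of_mem ht]

theorem qO_mem_USet_iff {αc : Set Circle} {A : Set X} {s : Circle} {t : X} :
    qO O (s, t) ∈ USet O αc A ↔ t ∈ A ∧ (t ∈ O ∨ s ∈ αc) := by
  -- `XO` is a plain `def`, so `simp` only sees the sum type after this unfolding.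
  change _ ∈ (Sum.inl '' {t' : O | (t' : X) ∈ A} ∪
    Sum.inr '' {p : Circle × ↥(Oᶜ) | p.1 ∈ αc ∧ (p.2 : X) ∈ A} : Set (O ⊕ (Circle × ↥(Oᶜ)))) ↔ _
  by_cases ht : t ∈ O
  · simp [qO_of_mem ht, ht]
  · simp [qO_of_notMem ht, ht, and_comm]

theorem leOne_qO {α : OSet Circle} {A : OSet X} {s s' : Circle} {t t' : X}
    (hs : α.le s s') (ht : A.le t t') : leOne O α A (qO O (s, t)) (qO O (s', t')) :=
  ⟨(s, t), (s', t'), hs, ht, rfl, rfl⟩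

theorem leOne_qO_of_mem {α : OSet Circle} {A : OSet X} {σ : Circle} (hσ : α.le σ σ)
    {t t' : X} (ht : t ∈ O) (ht' : t' ∈ O) (htt' : A.le t t') (s s' : Circle) :
    leOne O α A (qO O (s, t)) (qO O (s', t')) := by
  rw [qO_eq_of_mem ht s σ, qO_eq_of_mem ht' s' σ]
  exact leOne_qO hσ htt'

end XO

theorem arcOSet_le_self {a b x : ℝ} (hx : x ∈ Set.Ioo a b) :
    (arcOSet a b).le (Circle.exp x) (Circle.exp x) :=
  ⟨x, hx, x, hx, le_rfl, rfl, rfl⟩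

theorem exists_mem_dCircleBasis (s : Circle) : ∃ β ∈ dCircleBasis, s ∈ β.carrier := by
  refine ⟨arcOSet (Complex.arg s - 1) (Complex.arg s + 1),
    ⟨_, _, by norm_num, by nlinarith [Real.pi_gt_three], rfl⟩,
    Complex.arg s, ⟨by linarith, by linarith⟩, Circle.exp_arg s⟩

theorem IsOrderedBasis.exists_laxSub_of_subset {X : Type u} [TopologicalSpace X]
    {𝔅 : Set (OSet X)} (h𝔅 : IsOrderedBasis 𝔅) {A : OSet X} (hA : A ∈ openPosets 𝔅)
    {U : Set X} (hU : IsOpen U) {t : X} (htA : t ∈ A.carrier) (htU : t ∈ U) :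
    ∃ B ∈ 𝔅, t ∈ B.carrier ∧ B.carrier ⊆ U ∧ B.laxSub A := by
  obtain ⟨BA, hBA, htBA, hBAA⟩ := hA t htA
  obtain ⟨_, ⟨BU, hBU, rfl⟩, htBU, hBUsub⟩ := h𝔅.isBasis.exists_subset_of_mem_open
    (Set.mem_inter htU htBA) (hU.inter (h𝔅.isBasis.isOpen ⟨BA, hBA, rfl⟩))
  obtain ⟨B, hB, htB, hBsub, hBle⟩ := h𝔅.compat t BU hBU BA hBA htBU htBA
  exact ⟨B, hB, htB, fun p hp => (hBUsub (hBsub hp).1).1,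
    fun p hp => hBAA.1 (hBsub hp).2, fun p q hpq => hBAA.2 p q (hBle p q hpq).2⟩

theorem locIncrAt_qO_UOSet {X : Type u} [TopologicalSpace X] {𝔅 : Set (OSet X)}
    (h𝔅 : IsOrderedBasis 𝔅) {O : Set X} (hO : IsOpen O) {a b : ℝ} (hab : 0 < b - a)
    (hba : b - a < 2 * Real.pi) {A : OSet X} (hA : A ∈ openPosets 𝔅) (x : Circle × X) :
    LocIncrAt (prodBasis dCircleBasis 𝔅) {UOSet O (arcOSet a b) A} (qO O) x := by
  obtain ⟨s, t⟩ := x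
  rintro _ rfl hx
  obtain ⟨htA, htO | hs⟩ := qO_mem_USet_iff.1 hx
  · obtain ⟨B, hB, htB, hBO, hBA⟩ := h𝔅.exists_laxSub_of_subset hA hO htA htO
    obtain ⟨β, hβ, hsβ⟩ := exists_mem_dCircleBasis s
    have hσ := arcOSet_le_self (a := a) (b := b) (x := (a + b) / 2) ⟨by linarith, by linarith⟩
    refine ⟨β.prod B, ⟨β, hβ, B, hB, rfl⟩, ⟨hsβ, htB⟩, ?_, ?_⟩
    · rintro ⟨s₁, t₁⟩ ⟨-, ht₁⟩
      exact qO_mem_USet_iff.2 ⟨hBA.1 ht₁, Or.inl (hBO ht₁)⟩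
    · rintro ⟨s₁, t₁⟩ ⟨s₂, t₂⟩ ⟨-, ht₁₂⟩
      obtain ⟨ht₁, ht₂⟩ := (h𝔅.isPoset B hB).1 t₁ t₂ ht₁₂
      exact .single (leOne_qO_of_mem hσ (hBO ht₁) (hBO ht₂) (hBA.2 _ _ ht₁₂) s₁ s₂)
  · obtain ⟨B, hB, htB, hBA⟩ := hA t htA
    refine ⟨(arcOSet a b).prod B, ⟨_, ⟨a, b, hab, hba, rfl⟩, B, hB, rfl⟩, ⟨hs, htB⟩, ?_, ?_⟩
    · rintro ⟨s₁, t₁⟩ ⟨hs₁, ht₁⟩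
      exact qO_mem_USet_iff.2 ⟨hBA.1 ht₁, Or.inr hs₁⟩
    · rintro ⟨s₁, t₁⟩ ⟨s₂, t₂⟩ ⟨hs₁₂, ht₁₂⟩
      exact .single (leOne_qO hs₁₂ (hBA.2 _ _ ht₁₂))

theorem stmt8_general {X : Type u} [TopologicalSpace X] (𝔅 : Set (OSet X))
    (h𝔅 : IsOrderedBasis 𝔅) (O : Set X) (hO : IsOpen O) :
    LocIncr (prodBasis dCircleBasis 𝔅) (XOBasis 𝔅 O) (qO O) := by
  rintro x _ ⟨a, b, hab, hba, A, hA, rfl⟩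
  exact locIncrAt_qO_UOSet h𝔅 hO hab hba hA x _ rfl

/-- The map `q_O : S⃗¹ × X → X_O` is locally increasing. -/
theorem stmt8 {X : Type u} [TopologicalSpace X] (𝔅 : Set (OSet X))
    (h𝔅 : IsOrderedBasis 𝔅) (star : X) (O : Set X) (hO : IsOpen O) (hstar : star ∈ O) :
    LocIncr (prodBasis dCircleBasis 𝔅) (XOBasis 𝔅 O) (qO O) :=
  stmt8_general 𝔅 h𝔅 O hO
end

section
/- Let X be a locally ordered space, ∗ ∈ X, O an open neighbourhood of ∗, and Y a locally ordered space. Any locally increasing map f : S⃗¹ × X → Y such that O ⊆ K(f) factorizes through q_O : S⃗¹ × X → X_O in a unique way: there is a unique locally increasing map h : X_O → Y with f = h ∘ q_O. -/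
universe u v w v'

/-!
Since `f` does not depend on the circle coordinate over `O`, it descends along the
surjection `q_O` to a map `h`, which is therefore unique. For local increase of `h`
at `q_O x`, take the basis element `α × A` at `x` given by local increase of `f`:
then `U_{α,A} = q_O(α × A)`, and `≤_{α,A}`, being the transitive closure of the
image of the product order, is carried by `h` into the transitive order of the target.
-/

namespace XO

variable {X : Type u} {Y : Type v} {O : Set X}

/-- On `O ⊆ K(f)` the circle coordinate is irrelevant, so any point of the
circle, here `1`, may be used. -/
noncomputable def lift (f : Circle × X → Y) (O : Set X) : XO X O → Y :=
  Sum.elim (fun t => f (1, (t : X))) (fun p => f (p.1, (p.2 : X)))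

theorem qO_of_mem {s : Circle} {t : X} (ht : t ∈ O) :
    qO O (s, t) = Sum.inl ⟨t, ht⟩ :=
  dif_pos ht

theorem qO_of_notMem {s : Circle} {t : X} (ht : t ∉ O) :
    qO O (s, t) = Sum.inr (s, ⟨t, ht⟩) :=
  dif_neg ht

theorem qO_surjective : Function.Surjective (qO O) := by
  rintro (t | ⟨s, t⟩)
  · exact ⟨(1, t), qO_of_mem t.2⟩
  · exact ⟨(s, t), qO_of_notMem t.2⟩

theorem lift_qO {f : Circle × X → Y} (hK : O ⊆ Kset f) (x : Circle × X) :
    lift f O (qO O x) = f x := by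
  obtain ⟨s, t⟩ := x
  by_cases ht : t ∈ O
  · rw [qO_of_mem ht]
    exact hK ht 1 s
  · rw [qO_of_notMem ht]
    rfl

theorem lift_comp_qO {f : Circle × X → Y} (hK : O ⊆ Kset f) : lift f O ∘ qO O = f :=
  funext (lift_qO hK)

/-- A point of `O ∩ A` is hit from any point of the arc, hence the nonemptiness. -/
theorem USet_eq_image {αc : Set Circle} {A : Set X} (hα : αc.Nonempty) :
    USet O αc A = qO O '' (αc ×ˢ A) := by
  obtain ⟨s₀, hs₀⟩ := hα
  ext u
  constructor
  · rintro (⟨t, htA, rfl⟩ | ⟨⟨s, t⟩, ⟨hs, htA⟩, rfl⟩)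
    · exact ⟨(s₀, t), ⟨hs₀, htA⟩, qO_of_mem t.2⟩
    · exact ⟨(s, t), ⟨hs, htA⟩, qO_of_notMem t.2⟩
  · rintro ⟨⟨s, t⟩, ⟨hs, htA⟩, rfl⟩
    by_cases ht : t ∈ O
    · exact Or.inl ⟨⟨t, ht⟩, htA, (qO_of_mem ht).symm⟩
    · exact Or.inr ⟨(s, ⟨t, ht⟩), ⟨hs, htA⟩, (qO_of_notMem ht).symm⟩

theorem lift_le_of_UOSet_le {f : Circle × X → Y} (hK : O ⊆ Kset f)
    {α : OSet Circle} {A : OSet X} {B' : OSet Y} (hB' : B'.IsPoset)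
    (hmono : ∀ x x', (α.prod A).le x x' → B'.le (f x) (f x')) {u u' : XO X O}
    (huu' : (UOSet O α A).le u u') : B'.le (lift f O u) (lift f O u') := by
  have hstep : ∀ u u', leOne O α A u u' →
      Relation.TransGen B'.le (lift f O u) (lift f O u') := by
    rintro _ _ ⟨x, x', hle₁, hle₂, rfl, rfl⟩
    rw [lift_qO hK, lift_qO hK]
    exact .single (hmono x x' ⟨hle₁, hle₂⟩)
  have : IsTrans Y B'.le := ⟨hB'.2.2.2⟩
  rw [← Relation.transGen_eq_self (r := B'.le)]
  exact huu'.lift' _ hstep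

theorem mem_openPosets_of_mem {𝔅 : Set (OSet X)} {A : OSet X} (hA : A ∈ 𝔅) :
    A ∈ openPosets 𝔅 :=
  fun _ hx => ⟨A, hA, hx, subset_rfl, fun _ _ h => h⟩

theorem locIncr_lift {𝔅 : Set (OSet X)} {𝔅' : Set (OSet Y)}
    (h𝔅' : ∀ B' ∈ 𝔅', B'.IsPoset) {f : Circle × X → Y}
    (hf : LocIncr (prodBasis dCircleBasis 𝔅) 𝔅' f) (hK : O ⊆ Kset f) :
    LocIncr (XOBasis 𝔅 O) 𝔅' (lift f O) := by
  intro u B' hB' hu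
  obtain ⟨x, rfl⟩ := qO_surjective u
  rw [lift_qO hK] at hu
  obtain ⟨_, ⟨α, ⟨a, b, hab, hab', rfl⟩, A, hA, rfl⟩, hx, hmaps, hmono⟩ := hf x B' hB' hu
  have hU : (UOSet O (arcOSet a b) A).carrier = qO O '' ((arcOSet a b).prod A).carrier :=
    USet_eq_image ⟨x.1, hx.1⟩
  refine ⟨UOSet O (arcOSet a b) A, ⟨a, b, hab, hab', A, mem_openPosets_of_mem hA, rfl⟩,
    hU ▸ ⟨x, hx, rfl⟩, ?_, fun _ _ => lift_le_of_UOSet_le hK (h𝔅' B' hB') hmono⟩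
  rw [hU]
  rintro _ ⟨y, hy, rfl⟩
  rw [lift_qO hK]
  exact hmaps y hy

end XO

theorem stmt9_general {X : Type u} {Y : Type v} [TopologicalSpace Y]
    (𝔅 : Set (OSet X))
    (𝔅' : Set (OSet Y)) (h𝔅' : IsOrderedBasis 𝔅')
    (O : Set X)
    (f : Circle × X → Y) (hf : LocIncr (prodBasis dCircleBasis 𝔅) 𝔅' f)
    (hK : O ⊆ Kset f) :
    ∃! h : XO X O → Y, LocIncr (XOBasis 𝔅 O) 𝔅' h ∧ f = h ∘ qO O := by
  refine ⟨XO.lift f O, ⟨XO.locIncr_lift h𝔅'.isPoset hf hK, (XO.lift_comp_qO hK).symm⟩, ?_⟩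
  rintro h ⟨-, hfh⟩
  exact XO.qO_surjective.injective_comp_right (hfh.symm.trans (XO.lift_comp_qO hK).symm)

/-- Any locally increasing `f : S⃗¹ × X → Y` with `O ⊆ K(f)`
factorizes through `q_O` in a unique way (by a locally increasing map). -/
theorem stmt9 {X : Type u} {Y : Type v} [TopologicalSpace X] [TopologicalSpace Y]
    (𝔅 : Set (OSet X)) (h𝔅 : IsOrderedBasis 𝔅)
    (𝔅' : Set (OSet Y)) (h𝔅' : IsOrderedBasis 𝔅')
    (star : X) (O : Set X) (hO : IsOpen O) (hstar : star ∈ O)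
    (f : Circle × X → Y) (hf : LocIncr (prodBasis dCircleBasis 𝔅) 𝔅' f)
    (hK : O ⊆ Kset f) :
    ∃! h : XO X O → Y, LocIncr (XOBasis 𝔅 O) 𝔅' h ∧ f = h ∘ qO O :=
  stmt9_general 𝔅 𝔅' h𝔅' O f hf hK
end

section
/- Let X and Y be topological spaces, with Y locally Hausdorff (every point of Y has an open neighbourhood which is a Hausdorff space in the subspace topology), and let f : S¹ × X → Y be a continuous map, where S¹ is the unit circle. Then the set K(f) := {t ∈ X : f(s,t) = f(s',t) for all s, s' ∈ S¹} is a closed subset of X. -/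
universe u v w v'

/-! Let `t ∈ closure K(f)`. If `f (s, t)` and `f (s₀, t)` lie in a Hausdorff open set `U`, they
can be separated by disjoint open sets of `Y`, and the usual Hausdorff argument applied to the maps
`f (s, ·)` and `f (s₀, ·)`, which agree on `K(f)`, shows `f (s, t) = f (s₀, t)`. Hence
`s ↦ f (s, t)` is locally constant, so constant since `S¹` is connected. -/

section LocallyHausdorff

variable {X : Type*} {Y : Type*} {Z : Type*} [TopologicalSpace X] [TopologicalSpace Y]
  [TopologicalSpace Z]

theorem exists_disjoint_isOpen_of_isOpen_t2Space {U : Set Y} (hU : IsOpen U) [T2Space U]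
    {y₁ y₂ : Y} (h₁ : y₁ ∈ U) (h₂ : y₂ ∈ U) (hne : y₁ ≠ y₂) :
    ∃ V₁ V₂ : Set Y, IsOpen V₁ ∧ IsOpen V₂ ∧ y₁ ∈ V₁ ∧ y₂ ∈ V₂ ∧ Disjoint V₁ V₂ := by
  obtain ⟨W₁, W₂, hW₁, hW₂, hy₁, hy₂, hdisj⟩ :=
    t2_separation (x := (⟨y₁, h₁⟩ : U)) (y := ⟨y₂, h₂⟩) (by simpa using hne)
  exact ⟨_, _, hU.isOpenMap_subtype_val _ hW₁, hU.isOpenMap_subtype_val _ hW₂,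
    ⟨_, hy₁, rfl⟩, ⟨_, hy₂, rfl⟩, (Set.disjoint_image_iff Subtype.val_injective).2 hdisj⟩

theorem eq_of_mem_closure_of_eqOn {g₁ g₂ : X → Y} (hg₁ : Continuous g₁) (hg₂ : Continuous g₂)
    {S : Set X} (hS : Set.EqOn g₁ g₂ S) {t : X} (ht : t ∈ closure S)
    {U : Set Y} (hU : IsOpen U) [T2Space U] (h₁ : g₁ t ∈ U) (h₂ : g₂ t ∈ U) :
    g₁ t = g₂ t := by
  by_contra hne
  obtain ⟨V₁, V₂, hV₁, hV₂, hyV₁, hyV₂, hdisj⟩ :=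
    exists_disjoint_isOpen_of_isOpen_t2Space hU h₁ h₂ hne
  obtain ⟨k, ⟨hkV₁, hkV₂⟩, hkS⟩ := mem_closure_iff.mp ht _
    ((hV₁.preimage hg₁).inter (hV₂.preimage hg₂)) ⟨hyV₁, hyV₂⟩
  exact hdisj.ne_of_mem hkV₁ hkV₂ (hS hkS)

theorem isLocallyConstant_slice_of_mem_closure_constant_slices
    (hY : ∀ y : Y, ∃ U : Set Y, IsOpen U ∧ y ∈ U ∧ T2Space U)
    {f : Z × X → Y} (hf : Continuous f) {t : X}
    (ht : t ∈ closure {x | ∀ s s' : Z, f (s, x) = f (s', x)}) :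
    IsLocallyConstant fun s => f (s, t) := by
  refine (IsLocallyConstant.iff_exists_open _).2 fun s₀ => ?_
  obtain ⟨U, hU, hs₀U, _⟩ := hY (f (s₀, t))
  refine ⟨_, hU.preimage (hf.comp (.prodMk_left t)), hs₀U, fun s hsU => ?_⟩
  refine eq_of_mem_closure_of_eqOn (hf.comp (.prodMk_right s)) (hf.comp (.prodMk_right s₀))
    ?_ ht hU hsU hs₀U
  exact fun _ hx => hx s s₀

end LocallyHausdorff

/-- If `Y` is locally Hausdorff and `f : S¹ × X → Y` is
continuous, then `K(f)` is closed in `X`. -/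
theorem stmt11 {X : Type u} {Y : Type v} [TopologicalSpace X] [TopologicalSpace Y]
    (hY : ∀ y : Y, ∃ U : Set Y, IsOpen U ∧ y ∈ U ∧ T2Space U)
    (f : Circle × X → Y) (hf : Continuous f) :
    IsClosed (Kset f) := by
  refine closure_subset_iff_isClosed.mp fun t ht => ?_
  have hconst := isLocallyConstant_slice_of_mem_closure_constant_slices hY hf ht
  exact hconst.apply_eq_of_preconnectedSpace
end
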